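/- arXiv:1911.09248 — 4 statements merged into one kernel-verified Lean document; each statement's English description precedes it below -/
import Mathlib

section
/- Let c ∈ ℝ, let m1, m0 : ℝ × ℝ → ℝ, and let m : ℝ × ℝ → ℝ satisfy m(x,z) = m1(x,z) for all x > c and m(x,z) = m0(x,z) for all x < c. Let q1, q0 : ℝ × ℝ → ℝ, and let q : ℝ × ℝ → ℝ satisfy q(z,x) = q1(z,x) for all x > c and q(z,x) = q0(z,x) for x ≤ c. Assume for each z that x ↦ m1(x,z) is right-continuous at c, x ↦ m0(x,z) is left-continuous at c, and x ↦ q0(z,x) is left-continuous at c. Suppose z ↦ (m1(c,z) − m0(c,z)) q0(z,c) is integrable. Then for each z the limits m(c+,z) := lim_{x→c+} m(x,z), m(c−,z) := lim_{x→c−} m(x,z) and q(z,c−) := lim_{x→c−} q(z,x) exist, and τ^{w2}_SRD := ∫ (m1(c,z) − m0(c,z)) q0(z,c) dz = ∫ (m(c+,z) − m(c−,z)) q(z,c−) dz. -/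
open Filter Topology MeasureTheory

/-- Theorem 1, part two: nonparametric identification of τ^{w2}_SRD, the ATE over the
locally untreated population, from one-sided limits of observed quantities. -/
theorem stmt7 (c : ℝ) (m1 m0 m : ℝ → ℝ → ℝ) (q1 q0 q : ℝ → ℝ → ℝ)
    (hmgt : ∀ x z, c < x → m x z = m1 x z)
    (hmlt : ∀ x z, x < c → m x z = m0 x z)
    (hqgt : ∀ z x, c < x → q z x = q1 z x)
    (hqle : ∀ z x, x ≤ c → q z x = q0 z x)
    (hm1 : ∀ z, ContinuousWithinAt (fun x => m1 x z) (Set.Ici c) c)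
    (hm0 : ∀ z, ContinuousWithinAt (fun x => m0 x z) (Set.Iic c) c)
    (hq0 : ∀ z, ContinuousWithinAt (fun x => q0 z x) (Set.Iic c) c)
    (hint : Integrable fun z => (m1 c z - m0 c z) * q0 z c) :
    (∀ z, Tendsto (fun x => m x z) (𝓝[>] c) (𝓝 (m1 c z))) ∧
    (∀ z, Tendsto (fun x => m x z) (𝓝[<] c) (𝓝 (m0 c z))) ∧
    (∀ z, Tendsto (fun x => q z x) (𝓝[<] c) (𝓝 (q0 z c))) ∧
    (∫ z, (m1 c z - m0 c z) * q0 z c)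
      = ∫ z, (limUnder (𝓝[>] c) (fun x => m x z)
          - limUnder (𝓝[<] c) (fun x => m x z))
          * limUnder (𝓝[<] c) (fun x => q z x) := by
  have hplus : ∀ z, Tendsto (fun x => m x z) (𝓝[>] c) (𝓝 (m1 c z)) := by
    intro z
    have h := (hm1 z).mono (Set.Ioi_subset_Ici le_rfl)
    refine h.congr' ?_
    filter_upwards [self_mem_nhdsWithin] with x hx
    exact (hmgt x z hx).symm
  have hminus : ∀ z, Tendsto (fun x => m x z) (𝓝[<] c) (𝓝 (m0 c z)) := by
    intro z
    have h := (hm0 z).mono (Set.Iio_subset_Iic le_rfl)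
    refine h.congr' ?_
    filter_upwards [self_mem_nhdsWithin] with x hx
    exact (hmlt x z hx).symm
  have hqminus : ∀ z, Tendsto (fun x => q z x) (𝓝[<] c) (𝓝 (q0 z c)) := by
    intro z
    have h := (hq0 z).mono (Set.Iio_subset_Iic le_rfl)
    refine h.congr' ?_
    filter_upwards [self_mem_nhdsWithin] with x hx
    exact (hqle z x hx.le).symm
  refine ⟨hplus, hminus, hqminus, ?_⟩
  congr 1
  funext z
  rw [(hplus z).limUnder_eq, (hminus z).limUnder_eq, (hqminus z).limUnder_eq]
end

section
/- Let c ∈ ℝ, let m1, m0 : ℝ × ℝ → ℝ, and let m : ℝ × ℝ → ℝ satisfy m(x,z) = m1(x,z) for all x > c and m(x,z) = m0(x,z) for all x < c. Let q1, q0 : ℝ × ℝ → ℝ, and let q : ℝ × ℝ → ℝ satisfy q(z,x) = q1(z,x) for all x > c and q(z,x) = q0(z,x) for x ≤ c. Assume for each z that x ↦ m1(x,z) is right-continuous at c, x ↦ m0(x,z) is left-continuous at c, x ↦ q0(z,x) is left-continuous at c, and x ↦ q1(z,x) is right-continuous at c. Suppose z ↦ (m1(c,z) − m0(c,z))·(q0(z,c)+q1(z,c))/2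 is integrable. Then the one-sided limits m(c+,z), m(c−,z), q(z,c−), q(z,c+) exist for each z, and τ^{w3}_SRD := ∫ (m1(c,z) − m0(c,z)) · (q0(z,c)+q1(z,c))/2 dz = ∫ (m(c+,z) − m(c−,z)) · (q(z,c−)+q(z,c+))/2 dz. -/
open Filter Topology MeasureTheory

/-- Theorem 1, part three: nonparametric identification of τ^{w3}_SRD (Frölich–Huber),
the ATE over the locally randomized population, from one-sided limits. -/
theorem stmt8 (c : ℝ) (m1 m0 m : ℝ → ℝ → ℝ) (q1 q0 q : ℝ → ℝ → ℝ)
    (hmgt : ∀ x z, c < x → m x z = m1 x z)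
    (hmlt : ∀ x z, x < c → m x z = m0 x z)
    (hqgt : ∀ z x, c < x → q z x = q1 z x)
    (hqle : ∀ z x, x ≤ c → q z x = q0 z x)
    (hm1 : ∀ z, ContinuousWithinAt (fun x => m1 x z) (Set.Ici c) c)
    (hm0 : ∀ z, ContinuousWithinAt (fun x => m0 x z) (Set.Iic c) c)
    (hq0 : ∀ z, ContinuousWithinAt (fun x => q0 z x) (Set.Iic c) c)
    (hq1 : ∀ z, ContinuousWithinAt (fun x => q1 z x) (Set.Ici c) c)
    (hint : Integrable fun z => (m1 c z - m0 c z) * ((q0 z c + q1 z c) / 2)) :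
    (∀ z, Tendsto (fun x => m x z) (𝓝[>] c) (𝓝 (m1 c z))) ∧
    (∀ z, Tendsto (fun x => m x z) (𝓝[<] c) (𝓝 (m0 c z))) ∧
    (∀ z, Tendsto (fun x => q z x) (𝓝[<] c) (𝓝 (q0 z c))) ∧
    (∀ z, Tendsto (fun x => q z x) (𝓝[>] c) (𝓝 (q1 z c))) ∧
    (∫ z, (m1 c z - m0 c z) * ((q0 z c + q1 z c) / 2))
      = ∫ z, (limUnder (𝓝[>] c) (fun x => m x z)
          - limUnder (𝓝[<] c) (fun x => m x z))
          * ((limUnder (𝓝[<] c) (fun x => q z x)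
              + limUnder (𝓝[>] c) (fun x => q z x)) / 2) := by

  have hM1 : ∀ z, Tendsto (fun x => m x z) (𝓝[>] c) (𝓝 (m1 c z)) := by
    intro z
    have h := (hm1 z).tendsto.mono_left (nhdsWithin_mono c Set.Ioi_subset_Ici_self)
    exact h.congr' (eventually_nhdsWithin_of_forall fun x hx => (hmgt x z hx).symm)
  have hM0 : ∀ z, Tendsto (fun x => m x z) (𝓝[<] c) (𝓝 (m0 c z)) := by
    intro z
    have h := (hm0 z).tendsto.mono_left (nhdsWithin_mono c Set.Iio_subset_Iic_self)
    exact h.congr' (eventually_nhdsWithin_of_forall fun x hx => (hmlt x z hx).symm)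
  have hQ0 : ∀ z, Tendsto (fun x => q z x) (𝓝[<] c) (𝓝 (q0 z c)) := by
    intro z
    have h := (hq0 z).tendsto.mono_left (nhdsWithin_mono c Set.Iio_subset_Iic_self)
    exact h.congr' (eventually_nhdsWithin_of_forall fun x hx => (hqle z x (le_of_lt hx)).symm)
  have hQ1 : ∀ z, Tendsto (fun x => q z x) (𝓝[>] c) (𝓝 (q1 z c)) := by
    intro z
    have h := (hq1 z).tendsto.mono_left (nhdsWithin_mono c Set.Ioi_subset_Ici_self)
    exact h.congr' (eventually_nhdsWithin_of_forall fun x hx => (hqgt z x hx).symm)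
  refine ⟨hM1, hM0, hQ0, hQ1, ?_⟩
  apply integral_congr_ae
  filter_upwards with z
  rw [(hM1 z).limUnder_eq, (hM0 z).limUnder_eq, (hQ0 z).limUnder_eq, (hQ1 z).limUnder_eq]
end

section
/- Let K : ℝ → ℝ be a kernel function: nonnegative, bounded, measurable, symmetric (K(−u) = K(u) for all u), supported in [−1,1], with ∫_ℝ K(u) du = 1, and write κ_q = ∫_{u>0} u^q K(u) du. Let c ∈ ℝ, δ > 0, M ≥ 0, and let f : ℝ → ℝ be three times differentiable on [c, c+δ] (one-sided derivatives at c) with |f'''(x)| ≤ M for all x ∈ [c, c+δ]. Then for every h with 0 < h < δ: |(1/h) ∫_{(c,∞)} K((x−c)/h) f(x) dx − ( (1/2) f(c) + κ_1 h f'(c) + (κ_2/2) h² f''(c) )| ≤ (κ_3 M / 6) h³. -/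
/-!
Substituting `x = c + h u` turns `(1/h) ∫_{x > c} K((x - c)/h) f x dx` into
`∫_{u > 0} K u f(c + h u) du`, and `K` lives on `u ≤ 1`, where `c + h u` stays in `[c, c + δ]`.
There the second-order Taylor polynomial of `f` at `c` is within `M (h u)³ / 6` of `f(c + h u)`,
obtained by integrating the bound `|f'''| ≤ M` three times. Integrating the polynomial against
`K` gives the half-moments, and by symmetry of `K` the zeroth one is `1/2`.
-/

open MeasureTheory Set

lemma abs_le_pow_succ_div_of_hasDerivWithinAt {g g' : ℝ → ℝ} {a b C : ℝ} (n : ℕ)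
    (hg : ∀ x ∈ Icc a b, HasDerivWithinAt g (g' x) (Icc a b) x) (ha : g a = 0)
    (hg' : ∀ x ∈ Icc a b, |g' x| ≤ C * (x - a) ^ n) :
    ∀ x ∈ Icc a b, |g x| ≤ C * (x - a) ^ (n + 1) / (n + 1) := by
  have hB : ∀ x, HasDerivAt (fun x => C * (x - a) ^ (n + 1) / (n + 1)) (C * (x - a) ^ n) x :=
    fun x => ((((hasDerivAt_pow (n + 1) (x - a)).comp_sub_const x a).const_mul C).div_const
      ((n : ℝ) + 1)).congr_deriv (by push_cast; field_simp)
  intro x hx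
  refine image_norm_le_of_norm_deriv_right_le_deriv_boundary
    (fun y hy => (hg y hy).continuousWithinAt)
    (fun y hy => ((hg y (Ico_subset_Icc_self hy)).mono_of_mem_nhdsWithin
      (Icc_mem_nhdsGE_of_mem hy)).mono_of_mem_nhdsWithin self_mem_nhdsWithin)
    (by simp [ha]) hB (fun y hy => hg' y (Ico_subset_Icc_self hy)) hx

lemma abs_sub_taylor_two_le {f f' f'' f''' : ℝ → ℝ} {a b M : ℝ}
    (hf : ∀ x ∈ Icc a b, HasDerivWithinAt f (f' x) (Icc a b) x)
    (hf' : ∀ x ∈ Icc a b, HasDerivWithinAt f' (f'' x) (Icc a b) x)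
    (hf'' : ∀ x ∈ Icc a b, HasDerivWithinAt f'' (f''' x) (Icc a b) x)
    (hf''' : ∀ x ∈ Icc a b, |f''' x| ≤ M) :
    ∀ x ∈ Icc a b, |f x - (f a + f' a * (x - a) + f'' a / 2 * (x - a) ^ 2)| ≤
      M / 6 * (x - a) ^ 3 := by
  have hlin : ∀ (k : ℝ) (n : ℕ) x, HasDerivWithinAt (fun x => k * (x - a) ^ (n + 1))
      (k * (n + 1) * (x - a) ^ n) (Icc a b) x := fun k n x =>
    (((hasDerivAt_pow (n + 1) (x - a)).comp_sub_const x a).const_mul k).hasDerivWithinAt.congr_deriv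
      (by push_cast; ring)
  have h2 := abs_le_pow_succ_div_of_hasDerivWithinAt 0
    (fun x hx => (hf'' x hx).sub_const (f'' a)) (sub_self _)
    (fun x hx => by simpa using hf''' x hx)
  have h1 := abs_le_pow_succ_div_of_hasDerivWithinAt 1
    (fun x hx => ((hf' x hx).sub_const (f' a)).sub (by simpa using hlin (f'' a) 0 x))
    (by simp) (fun x hx => by simpa using h2 x hx)
  have h0 := abs_le_pow_succ_div_of_hasDerivWithinAt (C := M / 2) 2
    (fun x hx => (((hf x hx).sub_const (f a)).sub (by simpa using hlin (f' a) 0 x)).sub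
      (hlin (f'' a / 2) 1 x))
    (by simp) (fun x hx => by
      convert h1 x hx using 2
      · simp only [Pi.sub_apply]; push_cast; ring
      · push_cast; ring)
  intro x hx
  convert h0 x hx using 2
  · simp only [Pi.sub_apply]; ring
  · push_cast; ring

lemma integrableOn_Ioi_mul_of_continuousOn_Icc {K g : ℝ → ℝ} {a b : ℝ}
    (hK : IntegrableOn K (Icc a b)) (hKb : ∀ u, b < u → K u = 0)
    (hg : ContinuousOn g (Icc a b)) : IntegrableOn (fun u => g u * K u) (Ioi a) :=
  (hK.continuousOn_mul hg isCompact_Icc).of_forall_sdiff_eq_zero measurableSet_Ioi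
    fun u ⟨hau, hu⟩ => by rw [hKb u (not_le.1 fun hub => hu ⟨hau.le, hub⟩), mul_zero]

lemma integral_Ioi_zero_of_even {K : ℝ → ℝ} (heven : ∀ u, K (-u) = K u) :
    ∫ u in Ioi 0, K u = (∫ u, K u) / 2 := by
  have hK_abs : (fun u => K |u|) = K := funext fun u => by
    rcases abs_choice u with hu | hu <;> rw [hu]; exact heven u
  rw [← hK_abs, integral_comp_abs, hK_abs]
  ring

lemma integral_Ioi_eq_smul_integral_Ioi_comp_affine {E : Type*} [NormedAddCommGroup E]
    [NormedSpace ℝ E] (F : ℝ → E) (c : ℝ) {h : ℝ} (hh : 0 < h) :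
    ∫ x in Ioi c, F x = h • ∫ u in Ioi 0, F (c + h * u) := by
  have hshift : ∫ y in Ioi 0, F (c + y) = ∫ x in Ioi c, F x := by
    rw [← integral_indicator measurableSet_Ioi, ← integral_indicator measurableSet_Ioi]
    conv_rhs => rw [← integral_add_left_eq_self _ c]
    simp [indicator]
  rw [integral_comp_mul_left_Ioi (fun y => F (c + y)) 0 hh, mul_zero, hshift, smul_smul,
    mul_inv_cancel₀ hh.ne', one_smul]

lemma abs_integral_Ioi_mul_sub_moments_le {K g : ℝ → ℝ} {a₀ a₁ a₂ C : ℝ}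
    (hK : ∀ u, 0 ≤ K u) (hK1 : ∀ u, 1 < u → K u = 0)
    (hmom : ∀ q : ℕ, IntegrableOn (fun u => u ^ q * K u) (Ioi 0))
    (hKg : IntegrableOn (fun u => K u * g u) (Ioi 0))
    (hg : ∀ u ∈ Icc 0 1, |g u - (a₀ + a₁ * u + a₂ * u ^ 2)| ≤ C * u ^ 3) :
    |(∫ u in Ioi 0, K u * g u) - (a₀ * (∫ u in Ioi 0, K u) + a₁ * (∫ u in Ioi 0, u * K u)
        + a₂ * ∫ u in Ioi 0, u ^ 2 * K u)| ≤ C * ∫ u in Ioi 0, u ^ 3 * K u := by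
  have hmom₀ : IntegrableOn K (Ioi 0) := by simpa using hmom 0
  have hmom₁ : IntegrableOn (fun u => u * K u) (Ioi 0) := by simpa using hmom 1
  have hP₁ : IntegrableOn (fun u => a₀ * K u + a₁ * (u * K u)) (Ioi 0) :=
    (hmom₀.const_mul a₀).add (hmom₁.const_mul a₁)
  have hP : IntegrableOn (fun u => a₀ * K u + a₁ * (u * K u) + a₂ * (u ^ 2 * K u)) (Ioi 0) :=
    hP₁.add ((hmom 2).const_mul a₂)
  have hR : IntegrableOn
      (fun u => K u * g u - (a₀ * K u + a₁ * (u * K u) + a₂ * (u ^ 2 * K u))) (Ioi 0) :=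
    hKg.sub hP
  have hPint : ∫ u in Ioi 0, (a₀ * K u + a₁ * (u * K u) + a₂ * (u ^ 2 * K u)) =
      a₀ * (∫ u in Ioi 0, K u) + a₁ * (∫ u in Ioi 0, u * K u) + a₂ * ∫ u in Ioi 0, u ^ 2 * K u := by
    rw [integral_add hP₁ ((hmom 2).const_mul a₂),
      integral_add (hmom₀.const_mul a₀) (hmom₁.const_mul a₁), integral_const_mul,
      integral_const_mul, integral_const_mul]
  have hpointwise : ∀ u ∈ Ioi (0 : ℝ),
      |K u * g u - (a₀ * K u + a₁ * (u * K u) + a₂ * (u ^ 2 * K u))| ≤ C * (u ^ 3 * K u) := by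
    intro u hu
    rcases le_or_gt u 1 with hu1 | hu1
    · calc |K u * g u - (a₀ * K u + a₁ * (u * K u) + a₂ * (u ^ 2 * K u))|
          = K u * |g u - (a₀ + a₁ * u + a₂ * u ^ 2)| := by
            rw [← abs_of_nonneg (hK u), ← abs_mul, abs_of_nonneg (hK u)]
            ring_nf
        _ ≤ K u * (C * u ^ 3) := mul_le_mul_of_nonneg_left (hg u ⟨hu.le, hu1⟩) (hK u)
        _ = C * (u ^ 3 * K u) := by ring
    · simp [hK1 u hu1]
  rw [← hPint, ← integral_sub hKg hP, ← integral_const_mul]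
  calc _ ≤ ∫ u in Ioi 0, |K u * g u - (a₀ * K u + a₁ * (u * K u) + a₂ * (u ^ 2 * K u))| :=
        abs_integral_le_integral_abs
    _ ≤ _ := setIntegral_mono_on hR.abs ((hmom 3).const_mul C) measurableSet_Ioi
        hpointwise

theorem stmt11_general (K : ℝ → ℝ)
    (hKnn : ∀ u, 0 ≤ K u)
    (hKsymm : ∀ u, K (-u) = K u) (hKsupp : ∀ u, u ∉ Set.Icc (-1 : ℝ) 1 → K u = 0)
    (hKone : (∫ u, K u) = 1)
    (c δ M : ℝ)
    (f f' f'' f''' : ℝ → ℝ)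
    (hd1 : ∀ x ∈ Set.Icc c (c + δ), HasDerivWithinAt f (f' x) (Set.Icc c (c + δ)) x)
    (hd2 : ∀ x ∈ Set.Icc c (c + δ), HasDerivWithinAt f' (f'' x) (Set.Icc c (c + δ)) x)
    (hd3 : ∀ x ∈ Set.Icc c (c + δ), HasDerivWithinAt f'' (f''' x) (Set.Icc c (c + δ)) x)
    (hbd : ∀ x ∈ Set.Icc c (c + δ), |f''' x| ≤ M) :
    ∀ h : ℝ, 0 < h → h < δ →
      |(1 / h) * (∫ x in Set.Ioi c, K ((x - c) / h) * f x)
          - ((1 / 2) * f c + (∫ u in Set.Ioi (0 : ℝ), u * K u) * h * f' c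
              + ((∫ u in Set.Ioi (0 : ℝ), u ^ 2 * K u) / 2) * h ^ 2 * f'' c)|
        ≤ (∫ u in Set.Ioi (0 : ℝ), u ^ 3 * K u) * M / 6 * h ^ 3 := by
  intro h hh hhδ
  -- the Bochner integral of a non-integrable function is `0`, so `hKone` forces integrability
  have hK : Integrable K := Integrable.of_integral_ne_zero (hKone ▸ one_ne_zero)
  have hK1 : ∀ u, 1 < u → K u = 0 := fun u hu => hKsupp u fun hu' => hu'.2.not_gt hu
  have hmom : ∀ q : ℕ, IntegrableOn (fun u => u ^ q * K u) (Ioi 0) := fun q =>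
    integrableOn_Ioi_mul_of_continuousOn_Icc hK.integrableOn hK1 (continuous_pow q).continuousOn
  have hmaps : MapsTo (fun u => c + h * u) (Icc 0 1) (Icc c (c + δ)) :=
    fun u ⟨hu0, hu1⟩ => ⟨by nlinarith, by nlinarith⟩
  have hf : ContinuousOn f (Icc c (c + δ)) := fun x hx => (hd1 x hx).continuousWithinAt
  have hfh : IntegrableOn (fun u => K u * f (c + h * u)) (Ioi 0) := by
    simpa only [mul_comm, Function.comp_apply] using
      integrableOn_Ioi_mul_of_continuousOn_Icc hK.integrableOn hK1 (hf.comp (by fun_prop) hmaps)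
  have htaylor : ∀ u ∈ Icc 0 1, |f (c + h * u) - (f c + h * f' c * u + h ^ 2 * f'' c / 2 * u ^ 2)|
      ≤ M * h ^ 3 / 6 * u ^ 3 := fun u hu => by
    have := abs_sub_taylor_two_le hd1 hd2 hd3 hbd _ (hmaps hu)
    simp only [add_sub_cancel_left] at this
    convert this using 1 <;> ring_nf
  have hexpand := abs_integral_Ioi_mul_sub_moments_le hKnn hK1 hmom hfh htaylor
  rw [integral_Ioi_zero_of_even hKsymm, hKone] at hexpand
  rw [integral_Ioi_eq_smul_integral_Ioi_comp_affine _ c hh, smul_eq_mul, ← mul_assoc,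
    one_div_mul_cancel hh.ne', one_mul]
  simp only [add_sub_cancel_left, mul_div_cancel_left₀ _ hh.ne']
  convert hexpand using 1 <;> ring_nf

/-- One-sided kernel Taylor expansion at a boundary point, with half-moments κ_q of the
kernel and error controlled by the third derivative bound (Lemma A.2 core). -/
theorem stmt11 (K : ℝ → ℝ)
    (hKnn : ∀ u, 0 ≤ K u) (hKbdd : ∃ B, ∀ u, K u ≤ B) (hKmeas : Measurable K)
    (hKsymm : ∀ u, K (-u) = K u) (hKsupp : ∀ u, u ∉ Set.Icc (-1 : ℝ) 1 → K u = 0)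
    (hKone : (∫ u, K u) = 1)
    (c δ M : ℝ) (hδ : 0 < δ) (hM : 0 ≤ M)
    (f f' f'' f''' : ℝ → ℝ)
    (hd1 : ∀ x ∈ Set.Icc c (c + δ), HasDerivWithinAt f (f' x) (Set.Icc c (c + δ)) x)
    (hd2 : ∀ x ∈ Set.Icc c (c + δ), HasDerivWithinAt f' (f'' x) (Set.Icc c (c + δ)) x)
    (hd3 : ∀ x ∈ Set.Icc c (c + δ), HasDerivWithinAt f'' (f''' x) (Set.Icc c (c + δ)) x)
    (hbd : ∀ x ∈ Set.Icc c (c + δ), |f''' x| ≤ M) :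
    ∀ h : ℝ, 0 < h → h < δ →
      |(1 / h) * (∫ x in Set.Ioi c, K ((x - c) / h) * f x)
          - ((1 / 2) * f c + (∫ u in Set.Ioi (0 : ℝ), u * K u) * h * f' c
              + ((∫ u in Set.Ioi (0 : ℝ), u ^ 2 * K u) / 2) * h ^ 2 * f'' c)|
        ≤ (∫ u in Set.Ioi (0 : ℝ), u ^ 3 * K u) * M / 6 * h ^ 3 :=
  stmt11_general K hKnn hKsymm hKsupp hKone c δ M f f' f'' f''' hd1 hd2 hd3 hbd
end

section
/- Let K : ℝ → ℝ be a kernel function: nonnegative, bounded, measurable, symmetric (K(−u) = K(u) for all u), supported in [−1,1], with ∫_ℝ K(u) du = 1, and write κ_q = ∫_{u>0} u^q K(u) du. Let c ∈ ℝ, δ > 0, M ≥ 0, and let p : ℝ × ℝ → ℝ be a nonnegative function that is twice continuously differentiable on [c, c+δ] × ℝ (one-sided in the first argument at c) with all second-order partial derivatives bounded in absolute value by M there. Then for every z ∈ ℝ and every h with 0 < h < δ: |(2/h²) ∫_{(c,∞)} ∫_ℝ K((x−c)/h) K((z−w)/h) p(x,w) dw dx − p(c,z) − 2 κ_1 h ∂_x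 p(c,z)| ≤ M (2κ_2 + 4κ_1²) h², where ∂_x p(c,z) is the right partial derivative of p in its first argument at (c,z). -/
/-!
Substituting `x = c + h u`, `w = z - h v` turns the estimator into
`2 ∫_{u > 0} K u ∫ K v p(c + h u, z - h v) dv du`. Expand `p` to first order around `(c, z)`;
the second-order Taylor remainder is at most `M/2 · h² (u² + v²)` since the second derivative
is bounded by `M`. In the inner integral over the whole line the term linear in `v` vanishes
because `K` is even, while the outer integral only sees `u > 0`: there `2 ∫ K = 1` and the
linear term contributes `2 κ₁ h ∂ₓp(c, z)`. The remainder integrates to at most `2 M κ₂ h²`.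
-/

open MeasureTheory Set

theorem Convex.norm_image_sub_sub_fderivWithin_le {E F : Type*} [NormedAddCommGroup E]
    [NormedSpace ℝ E] [NormedAddCommGroup F] [NormedSpace ℝ F] {f : E → F} {s : Set E}
    {M : ℝ} (hs : Convex ℝ s) (hs' : UniqueDiffOn ℝ s) (hf : ContDiffOn ℝ 2 f s)
    (hbd : ∀ y ∈ s, ‖iteratedFDerivWithin ℝ 2 f s y‖ ≤ M) {x y : E} (hx : x ∈ s)
    (hy : y ∈ s) :
    ‖f y - f x - fderivWithin ℝ f s x (y - x)‖ ≤ M / 2 * ‖y - x‖ ^ 2 := by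
  set f' := fderivWithin ℝ f s
  have hf'_lip : ∀ z ∈ s, ‖f' z - f' x‖ ≤ M * ‖z - x‖ := by
    refine fun z hz => hs.norm_image_sub_le_of_norm_fderivWithin_le
      ((hf.fderivWithin hs' le_rfl).differentiableOn one_ne_zero) (fun w hw => ?_) hx hz
    rw [← norm_iteratedFDerivWithin_one _ (hs' w hw),
      norm_iteratedFDerivWithin_fderivWithin hs' hw]
    exact hbd w hw
  have hseg : MapsTo (fun t : ℝ => x + t • (y - x)) (Icc 0 1) s :=
    fun t ht => hs.add_smul_sub_mem hx hy ht
  have hderiv : ∀ t ∈ Icc (0 : ℝ) 1,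
      HasDerivWithinAt (fun t : ℝ => f (x + t • (y - x)) - f x - t • f' x (y - x))
        (f' (x + t • (y - x)) (y - x) - f' x (y - x)) (Icc 0 1) t := by
    intro t ht
    have hline : HasDerivWithinAt (fun t : ℝ => x + t • (y - x)) (y - x) (Icc 0 1) t := by
      simpa using (((hasDerivAt_id t).smul_const (y - x)).const_add x).hasDerivWithinAt
    have hlin := ((hasDerivAt_id t).smul_const (f' x (y - x))).hasDerivWithinAt (s := Icc 0 1)
    simp only [id, one_smul] at hlin
    have hf_diff := (hf.differentiableOn two_ne_zero _ (hseg ht)).hasFDerivWithinAt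
    exact ((hf_diff.comp_hasDerivWithinAt t hline hseg).sub_const (f x)).sub hlin
  have hderiv_le : ∀ t ∈ Ico (0 : ℝ) 1,
      ‖f' (x + t • (y - x)) (y - x) - f' x (y - x)‖ ≤ M * ‖y - x‖ ^ 2 * t := by
    intro t ht
    calc ‖f' (x + t • (y - x)) (y - x) - f' x (y - x)‖
        = ‖(f' (x + t • (y - x)) - f' x) (y - x)‖ := by rw [sub_apply]
      _ ≤ ‖f' (x + t • (y - x)) - f' x‖ * ‖y - x‖ := ContinuousLinearMap.le_opNorm _ _
      _ ≤ M * ‖t • (y - x)‖ * ‖y - x‖ := by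
          gcongr
          simpa using hf'_lip _ (hseg (Ico_subset_Icc_self ht))
      _ = M * ‖y - x‖ ^ 2 * t := by
          rw [norm_smul, Real.norm_of_nonneg ht.1]; ring
  have hB (t : ℝ) : HasDerivAt (fun t => M / 2 * ‖y - x‖ ^ 2 * t ^ 2) (M * ‖y - x‖ ^ 2 * t) t :=
    ((hasDerivAt_pow 2 t).const_mul (M / 2 * ‖y - x‖ ^ 2)).congr_deriv (by push_cast; ring)
  simpa using image_norm_le_of_norm_deriv_right_le_deriv_boundary
    (HasDerivWithinAt.continuousOn hderiv)
    (fun t ht => (hderiv t (Ico_subset_Icc_self ht)).mono_of_mem_nhdsWithin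
      (Icc_mem_nhdsGE_of_mem ht)) (by simp) hB hderiv_le (right_mem_Icc.2 zero_le_one)

theorem abs_sub_sub_fderivWithin_prod_le {P : ℝ × ℝ → ℝ} {S : Set (ℝ × ℝ)} {M : ℝ}
    (hS : Convex ℝ S) (hS' : UniqueDiffOn ℝ S) (hP : ContDiffOn ℝ 2 P S)
    (hbd : ∀ y ∈ S, ‖iteratedFDerivWithin ℝ 2 P S y‖ ≤ M) {x y : ℝ × ℝ} (hx : x ∈ S)
    (hy : y ∈ S) :
    |P y - P x - (y.1 - x.1) * fderivWithin ℝ P S x (1, 0)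
        - (y.2 - x.2) * fderivWithin ℝ P S x (0, 1)|
      ≤ M / 2 * ((y.1 - x.1) ^ 2 + (y.2 - x.2) ^ 2) := by
  have hM : 0 ≤ M := (norm_nonneg _).trans (hbd x hx)
  have hsplit :
      y - x = (y.1 - x.1) • ((1 : ℝ), (0 : ℝ)) + (y.2 - x.2) • ((0 : ℝ), (1 : ℝ)) := by
    ext <;> simp
  have hnorm : ‖y - x‖ ^ 2 ≤ (y.1 - x.1) ^ 2 + (y.2 - x.2) ^ 2 := by
    rw [Prod.norm_def, Prod.fst_sub, Prod.snd_sub, Real.norm_eq_abs, Real.norm_eq_abs]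
    rcases le_total |y.1 - x.1| |y.2 - x.2| with h | h
    · rw [max_eq_right h, sq_abs]; nlinarith
    · rw [max_eq_left h, sq_abs]; nlinarith
  calc _ = ‖P y - P x - fderivWithin ℝ P S x (y - x)‖ := by
        rw [hsplit, map_add, map_smul, map_smul, smul_eq_mul, smul_eq_mul, Real.norm_eq_abs]
        ring_nf
    _ ≤ M / 2 * ‖y - x‖ ^ 2 := hS.norm_image_sub_sub_fderivWithin_le hS' hP hbd hx hy
    _ ≤ _ := by gcongr

theorem Function.Odd.integral_eq_zero {g : ℝ → ℝ} (hg : g.Odd) : ∫ u, g u = 0 := by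
  have h := integral_neg_eq_self g volume
  simp only [hg.eq, integral_neg] at h
  linarith

theorem Function.Even.integral_eq_two_mul_integral_Ioi {g : ℝ → ℝ} (hg : g.Even) :
    ∫ u, g u = 2 * ∫ u in Ioi 0, g u := by
  rw [← integral_comp_abs]
  congr 1 with u
  rcases abs_choice u with h | h <;> rw [h]
  exact (hg.eq u).symm

theorem integral_Ioi_eq_smul_integral_Ioi_comp {E : Type*} [NormedAddCommGroup E]
    [NormedSpace ℝ E] (f : ℝ → E) (c : ℝ) {h : ℝ} (hh : 0 < h) :
    ∫ x in Ioi c, f x = h • ∫ u in Ioi 0, f (c + h * u) := by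
  have himage : (fun u => c + h * u) '' Ioi 0 = Ioi c := by
    rw [← image_image (fun t => c + t) (h * ·), image_mul_left_Ioi hh, mul_zero,
      image_const_add_Ioi, add_zero]
  have hderiv (u : ℝ) : HasDerivWithinAt (fun u => c + h * u) h (Ioi 0) u := by
    simpa using ((hasDerivAt_id u).const_mul h |>.const_add c).hasDerivWithinAt
  rw [← himage, integral_image_eq_integral_abs_deriv_smul measurableSet_Ioi
    (fun u _ => hderiv u) ((add_right_injective c).comp (mul_right_injective₀ hh.ne')).injOn,
    abs_of_pos hh, integral_smul]

theorem integral_eq_smul_integral_comp_sub_mul {E : Type*} [NormedAddCommGroup E]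
    [NormedSpace ℝ E] (f : ℝ → E) (z : ℝ) {h : ℝ} (hh : 0 < h) :
    ∫ w, f w = h • ∫ v, f (z - h * v) := by
  rw [Measure.integral_comp_mul_left (fun t => f (z - t)), integral_sub_left_eq_self,
    abs_inv, abs_of_pos hh, smul_smul, mul_inv_cancel₀ hh.ne', one_smul]

theorem integrable_mul_of_ae_abs_le {α : Type*} [MeasurableSpace α] {μ : Measure α}
    {K g : α → ℝ} {C : ℝ} (hKnn : ∀ u, 0 ≤ K u) (hK : Integrable K μ)
    (hg : AEStronglyMeasurable g μ) (hbd : ∀ᵐ u ∂μ, K u ≠ 0 → |g u| ≤ C) :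
    Integrable (fun u => g u * K u) μ := by
  refine (hK.const_mul C).mono' (hg.mul hK.1) (hbd.mono fun u hu => ?_)
  rcases eq_or_ne (K u) 0 with h0 | h0
  · simp [h0]
  rw [norm_mul, Real.norm_eq_abs, Real.norm_eq_abs, abs_of_nonneg (hKnn u)]
  exact mul_le_mul_of_nonneg_right (hu h0) (hKnn u)

theorem integrable_mul_of_ae_abs_sub_le {μ : Measure ℝ} {K g : ℝ → ℝ} {a b A B : ℝ}
    (hKnn : ∀ u, 0 ≤ K u) (hK : Integrable K μ) (hK₁ : Integrable (fun u => u * K u) μ)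
    (hK₂ : Integrable (fun u => u ^ 2 * K u) μ) (hg : AEStronglyMeasurable g μ)
    (hbd : ∀ᵐ u ∂μ, K u ≠ 0 → |g u - a - b * u| ≤ A + B * u ^ 2) :
    Integrable (fun u => g u * K u) μ := by
  refine (((hK.const_mul (|a| + |A|)).add (hK₁.norm.const_mul |b|)).add
    (hK₂.const_mul |B|)).mono' (hg.mul hK.1) (hbd.mono fun u hu => ?_)
  rcases eq_or_ne (K u) 0 with h0 | h0
  · simp [h0]
  have hgu : |g u| ≤ |a| + |b| * |u| + |A| + |B| * u ^ 2 := by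
    have := abs_add_three (g u - a - b * u) a (b * u)
    rw [show g u - a - b * u + a + b * u = g u by ring, abs_mul] at this
    linarith [hu h0, le_abs_self A, mul_le_mul_of_nonneg_right (le_abs_self B) (sq_nonneg u)]
  simp only [Pi.add_apply, norm_mul, Real.norm_eq_abs, abs_of_nonneg (hKnn u)]
  nlinarith [hKnn u]

theorem abs_integral_mul_sub_affine_le {μ : Measure ℝ} {K g : ℝ → ℝ} {a b A B : ℝ}
    (hKnn : ∀ u, 0 ≤ K u) (hK : Integrable K μ) (hK₁ : Integrable (fun u => u * K u) μ)
    (hK₂ : Integrable (fun u => u ^ 2 * K u) μ) (hg : AEStronglyMeasurable g μ)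
    (hbd : ∀ᵐ u ∂μ, K u ≠ 0 → |g u - a - b * u| ≤ A + B * u ^ 2) :
    |∫ u, g u * K u ∂μ - a * ∫ u, K u ∂μ - b * ∫ u, u * K u ∂μ|
      ≤ A * ∫ u, K u ∂μ + B * ∫ u, u ^ 2 * K u ∂μ := by
  have hgK := integrable_mul_of_ae_abs_sub_le hKnn hK hK₁ hK₂ hg hbd
  rw [← integral_const_mul, ← integral_const_mul, ← integral_const_mul, ← integral_const_mul,
    ← integral_sub hgK (hK.const_mul a),
    ← integral_sub (f := fun u => g u * K u - a * K u) (hgK.sub (hK.const_mul a))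
      (hK₁.const_mul b),
    ← integral_add (hK.const_mul A) (hK₂.const_mul B), ← Real.norm_eq_abs]
  refine norm_integral_le_of_norm_le ((hK.const_mul A).add (hK₂.const_mul B))
    (hbd.mono fun u hu => ?_)
  rcases eq_or_ne (K u) 0 with h0 | h0
  · simp [h0]
  calc ‖g u * K u - a * K u - b * (u * K u)‖ = |g u - a - b * u| * K u := by
        rw [Real.norm_eq_abs, ← abs_of_nonneg (hKnn u), ← abs_mul, abs_of_nonneg (hKnn u)]
        ring_nf
    _ ≤ (A + B * u ^ 2) * K u := mul_le_mul_of_nonneg_right (hu h0) (hKnn u)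
    _ = A * K u + B * (u ^ 2 * K u) := by ring

structure IsSymmetricKernel (K : ℝ → ℝ) : Prop where
  nonneg : ∀ u, 0 ≤ K u
  even : K.Even
  eq_zero_of_notMem : ∀ u, u ∉ Icc (-1 : ℝ) 1 → K u = 0
  integral_eq_one : ∫ u, K u = 1

namespace IsSymmetricKernel

variable {K : ℝ → ℝ}

theorem mem_Icc_of_ne_zero (hK : IsSymmetricKernel K) {u : ℝ} (hu : K u ≠ 0) :
    u ∈ Icc (-1 : ℝ) 1 :=
  not_imp_comm.1 (hK.eq_zero_of_notMem u) hu

theorem integrable (hK : IsSymmetricKernel K) : Integrable K :=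
  Integrable.of_integral_ne_zero (by rw [hK.integral_eq_one]; exact one_ne_zero)

theorem integrable_mul (hK : IsSymmetricKernel K) {g : ℝ → ℝ} (hg : Continuous g) :
    Integrable (fun u => g u * K u) := by
  obtain ⟨C, hC⟩ :=
    (isCompact_Icc (a := -1) (b := 1)).exists_bound_of_continuousOn hg.continuousOn
  refine integrable_mul_of_ae_abs_le (C := C) hK.nonneg hK.integrable hg.aestronglyMeasurable
    (ae_of_all _ fun u hu => ?_)
  simpa only [Real.norm_eq_abs] using hC u (hK.mem_Icc_of_ne_zero hu)

theorem integral_Ioi (hK : IsSymmetricKernel K) : ∫ u in Ioi 0, K u = 1 / 2 := by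
  have := hK.even.integral_eq_two_mul_integral_Ioi
  rw [hK.integral_eq_one] at this
  linarith

theorem integral_mul_self (hK : IsSymmetricKernel K) : ∫ u, u * K u = 0 :=
  Function.Odd.integral_eq_zero fun u => by rw [hK.even.eq]; ring

theorem integral_sq_mul (hK : IsSymmetricKernel K) :
    ∫ u, u ^ 2 * K u = 2 * ∫ u in Ioi 0, u ^ 2 * K u :=
  Function.Even.integral_eq_two_mul_integral_Ioi fun u => by rw [hK.even.eq]; ring

theorem abs_integral_mul_sub_le (hK : IsSymmetricKernel K) {g : ℝ → ℝ} (hg : Continuous g)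
    {a b A B : ℝ} (hbd : ∀ u ∈ Icc (-1 : ℝ) 1, |g u - a - b * u| ≤ A + B * u ^ 2) :
    |(∫ u, g u * K u) - a| ≤ A + B * (2 * ∫ u in Ioi 0, u ^ 2 * K u) := by
  have := abs_integral_mul_sub_affine_le hK.nonneg hK.integrable
    (hK.integrable_mul continuous_id) (hK.integrable_mul (continuous_pow 2))
    hg.aestronglyMeasurable (ae_of_all _ fun u hu => hbd u (hK.mem_Icc_of_ne_zero hu))
  rwa [hK.integral_eq_one, hK.integral_mul_self, hK.integral_sq_mul, mul_one, mul_one, mul_zero,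
    sub_zero] at this

theorem abs_two_mul_integral_Ioi_mul_sub_le (hK : IsSymmetricKernel K) {g : ℝ → ℝ}
    (hg : AEStronglyMeasurable g (volume.restrict (Ioi 0))) {a b A B : ℝ}
    (hbd : ∀ u ∈ Ioc (0 : ℝ) 1, |g u - a - b * u| ≤ A + B * u ^ 2) :
    |2 * (∫ u in Ioi 0, g u * K u) - a - 2 * (∫ u in Ioi 0, u * K u) * b|
      ≤ A + 2 * B * ∫ u in Ioi 0, u ^ 2 * K u := by
  have := abs_integral_mul_sub_affine_le hK.nonneg hK.integrable.integrableOn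
    (hK.integrable_mul continuous_id).integrableOn
    (hK.integrable_mul (continuous_pow 2)).integrableOn hg
    ((ae_restrict_iff' measurableSet_Ioi).2 (ae_of_all _ fun u hu hKu =>
      hbd u ⟨hu, (hK.mem_Icc_of_ne_zero hKu).2⟩))
  rw [hK.integral_Ioi] at this
  set X := ∫ u in Ioi 0, g u * K u
  set κ₁ := ∫ u in Ioi 0, u * K u
  calc _ = 2 * |X - a * (1 / 2) - b * κ₁| := by
        rw [← abs_two, ← abs_mul]; ring_nf
    _ ≤ _ := by linarith

theorem abs_integral_mul_sub_fderivWithin_le (hK : IsSymmetricKernel K) {p : ℝ → ℝ → ℝ}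
    {s : Set ℝ} {M : ℝ} (hs : Convex ℝ s) (hs' : UniqueDiffOn ℝ s)
    (hp : ContDiffOn ℝ 2 (Function.uncurry p) (s ×ˢ univ))
    (hbd : ∀ y ∈ s ×ˢ univ,
      ‖iteratedFDerivWithin ℝ 2 (Function.uncurry p) (s ×ˢ univ) y‖ ≤ M)
    {c x : ℝ} (hc : c ∈ s) (hx : x ∈ s) (z h : ℝ) :
    |(∫ v, p x (z - h * v) * K v) - p c z
        - (x - c) * fderivWithin ℝ (Function.uncurry p) (s ×ˢ univ) (c, z) (1, 0)|
      ≤ M / 2 * ((x - c) ^ 2 + h ^ 2 * (2 * ∫ u in Ioi 0, u ^ 2 * K u)) := by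
  set D := fderivWithin ℝ (Function.uncurry p) (s ×ˢ univ) (c, z)
  have hline : MapsTo (fun v : ℝ => (x, z - h * v)) univ (s ×ˢ univ) :=
    fun v _ => mk_mem_prod hx (mem_univ _)
  have := hK.abs_integral_mul_sub_le (g := fun v => p x (z - h * v))
    (a := p c z + (x - c) * D (1, 0)) (b := -h * D (0, 1)) (A := M / 2 * (x - c) ^ 2)
    (B := M / 2 * h ^ 2) (hp.continuousOn.comp_continuous (by fun_prop) fun v => hline trivial)
    fun v _ => by
      have := abs_sub_sub_fderivWithin_prod_le (hs.prod convex_univ)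
        (hs'.prod uniqueDiffOn_univ) hp hbd (mk_mem_prod hc (mem_univ z)) (hline (mem_univ v))
      convert this using 2 <;> simp only [Function.uncurry_apply_pair, D] <;> ring
  calc _ = |(∫ v, p x (z - h * v) * K v) - (p c z + (x - c) * D (1, 0))| := by ring_nf
    _ ≤ _ := by linarith

end IsSymmetricKernel

theorem integral_Ioi_integral_kernel_mul_eq {K : ℝ → ℝ}
    (hKsupp : ∀ u, u ∉ Icc (-1 : ℝ) 1 → K u = 0) {p q : ℝ → ℝ → ℝ} {c h : ℝ} (hh : 0 < h)
    (hpq : ∀ x ∈ Ioc c (c + h), p x = q x) (z : ℝ) :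
    ∫ x in Ioi c, ∫ w, K ((x - c) / h) * K ((z - w) / h) * p x w
      = h ^ 2 * ∫ u in Ioi 0, (∫ v, q (c + h * u) (z - h * v) * K v) * K u := by
  rw [integral_Ioi_eq_smul_integral_Ioi_comp _ c hh, smul_eq_mul, sq, mul_assoc]
  congr 1
  rw [← integral_const_mul]
  refine setIntegral_congr_fun measurableSet_Ioi fun u hu => ?_
  simp only [add_sub_cancel_left, mul_div_cancel_left₀ _ hh.ne']
  rcases lt_or_ge 1 u with hu1 | hu1
  · simp [hKsupp u fun h => hu1.not_ge h.2]
  rw [hpq (c + h * u) ⟨by simpa using mul_pos hh hu, by nlinarith⟩,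
    integral_eq_smul_integral_comp_sub_mul _ z hh, smul_eq_mul, ← integral_mul_const]
  congr 1
  refine integral_congr_ae (ae_of_all _ fun v => ?_)
  simp only [sub_sub_cancel, mul_div_cancel_left₀ _ hh.ne']
  ring

theorem ContinuousOn.exists_continuous_uncurry_eqOn_Icc {α β : Type*} [TopologicalSpace α]
    [TopologicalSpace β] {p : ℝ → α → β} {a b : ℝ} (hab : a ≤ b)
    (hp : ContinuousOn (Function.uncurry p) (Icc a b ×ˢ univ)) :
    ∃ q : ℝ → α → β, Continuous (Function.uncurry q) ∧ EqOn q p (Icc a b) :=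
  ⟨fun x => p (projIcc a b hab x),
    hp.comp_continuous
      ((continuous_subtype_val.comp (continuous_projIcc.comp continuous_fst)).prodMk
        continuous_snd) fun y => mk_mem_prod (projIcc a b hab y.1).2 (mem_univ y.2),
    fun x hx => by simp [projIcc_of_mem hab hx]⟩

theorem derivWithin_eq_fderivWithin_prod_apply {E F : Type*} [NormedAddCommGroup E]
    [NormedSpace ℝ E] [NormedAddCommGroup F] [NormedSpace ℝ F] {p : ℝ → F → E} {s : Set ℝ}
    {t : Set F} {x : ℝ} {z : F}
    (hp : DifferentiableWithinAt ℝ (Function.uncurry p) (s ×ˢ t) (x, z))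
    (hs : UniqueDiffWithinAt ℝ s x) (hz : z ∈ t) :
    derivWithin (fun x => p x z) s x
      = fderivWithin ℝ (Function.uncurry p) (s ×ˢ t) (x, z) (1, 0) := by
  have := hp.hasFDerivWithinAt.comp_hasDerivWithinAt x
    ((hasDerivAt_id' x).prodMk (hasDerivAt_const x z)).hasDerivWithinAt
    fun y hy => mk_mem_prod hy hz
  exact this.derivWithin hs

theorem Continuous.aestronglyMeasurable_integral_mul {F : ℝ × ℝ → ℝ} (hF : Continuous F)
    {K : ℝ → ℝ} (hK : AEStronglyMeasurable K) :
    AEStronglyMeasurable (fun u => ∫ v, F (u, v) * K v) :=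
  (hF.aestronglyMeasurable.mul hK.comp_snd :
    AEStronglyMeasurable (fun y : ℝ × ℝ => F y * K y.2) (volume.prod volume)).integral_prod_right'

theorem stmt13_general (K : ℝ → ℝ)
    (hKnn : ∀ u, 0 ≤ K u)
    (hKsymm : ∀ u, K (-u) = K u) (hKsupp : ∀ u, u ∉ Set.Icc (-1 : ℝ) 1 → K u = 0)
    (hKone : (∫ u, K u) = 1)
    (c δ M : ℝ)
    (p : ℝ → ℝ → ℝ)
    (hpC2 : ContDiffOn ℝ 2 (Function.uncurry p)
      (Set.Icc c (c + δ) ×ˢ (Set.univ : Set ℝ)))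
    (hbd : ∀ q ∈ Set.Icc c (c + δ) ×ˢ (Set.univ : Set ℝ),
      ‖iteratedFDerivWithin ℝ 2 (Function.uncurry p)
        (Set.Icc c (c + δ) ×ˢ (Set.univ : Set ℝ)) q‖ ≤ M) :
    ∀ (z h : ℝ), 0 < h → h < δ →
      |(2 / h ^ 2) * (∫ x in Set.Ioi c, ∫ w, K ((x - c) / h) * K ((z - w) / h) * p x w)
          - p c z
          - 2 * (∫ u in Set.Ioi (0 : ℝ), u * K u) * h
              * derivWithin (fun x => p x z) (Set.Icc c (c + δ)) c|
        ≤ M * (2 * (∫ u in Set.Ioi (0 : ℝ), u ^ 2 * K u)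
            + 4 * (∫ u in Set.Ioi (0 : ℝ), u * K u) ^ 2) * h ^ 2 := by
  intro z h hh hhδ
  have hK : IsSymmetricKernel K := ⟨hKnn, hKsymm, hKsupp, hKone⟩
  have hcδ : c < c + δ := by linarith
  set S := Icc c (c + δ) ×ˢ (univ : Set ℝ)
  have hcz : (c, z) ∈ S := ⟨left_mem_Icc.2 hcδ.le, trivial⟩
  have hM : 0 ≤ M := (norm_nonneg _).trans (hbd _ hcz)
  set D := fderivWithin ℝ (Function.uncurry p) S (c, z)
  -- `p` is arbitrary off the strip, so the smoothed integrals are taken of a continuous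
  -- extension `q`; they agree with those of `p` because `K ((x - c) / h) = 0` for `x > c + h`.
  obtain ⟨q, hq, hqp⟩ := hpC2.continuousOn.exists_continuous_uncurry_eqOn_Icc hcδ.le
  have hI : ∀ u ∈ Ioc (0 : ℝ) 1,
      |(∫ v, q (c + h * u) (z - h * v) * K v) - p c z - h * D (1, 0) * u|
        ≤ M / 2 * h ^ 2 * (2 * ∫ u in Ioi 0, u ^ 2 * K u) + M / 2 * h ^ 2 * u ^ 2 := by
    intro u hu
    have hmem : c + h * u ∈ Icc c (c + δ) := ⟨by nlinarith [hu.1], by nlinarith [hu.2]⟩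
    have := hK.abs_integral_mul_sub_fderivWithin_le (convex_Icc _ _) (uniqueDiffOn_Icc hcδ)
      hpC2 hbd hcz.1 hmem z h
    rw [hqp hmem]
    convert this using 2 <;> ring
  have key := hK.abs_two_mul_integral_Ioi_mul_sub_le
    ((hq.comp (by fun_prop : Continuous fun y : ℝ × ℝ => (c + h * y.1, z - h * y.2))
      ).aestronglyMeasurable_integral_mul hK.integrable.1).restrict hI
  have hderiv : derivWithin (fun x => p x z) (Icc c (c + δ)) c = D (1, 0) :=
    derivWithin_eq_fderivWithin_prod_apply (hpC2.differentiableOn two_ne_zero _ hcz)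
      (uniqueDiffOn_Icc hcδ c (left_mem_Icc.2 hcδ.le)) (mem_univ z)
  rw [integral_Ioi_integral_kernel_mul_eq hKsupp hh
    (fun x hx => (hqp ⟨hx.1.le, by linarith [hx.2]⟩).symm) z, hderiv]
  calc _ = |2 * (∫ u in Ioi 0, (∫ v, q (c + h * u) (z - h * v) * K v) * K u) - p c z
        - 2 * (∫ u in Ioi 0, u * K u) * (h * D (1, 0))| := by
        congr 1; field_simp
    _ ≤ _ := key
    _ ≤ _ := by
        nlinarith [mul_nonneg (mul_nonneg hM (sq_nonneg (∫ u in Ioi 0, u * K u))) (sq_nonneg h)]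

/-- Lemma A.2, second claim: the one-sided bivariate kernel smooth of a joint density at
the boundary point (c,z) equals p(c,z) + 2κ₁h ∂ₓp(c,z) + O(h²). -/
theorem stmt13 (K : ℝ → ℝ)
    (hKnn : ∀ u, 0 ≤ K u) (hKbdd : ∃ B, ∀ u, K u ≤ B) (hKmeas : Measurable K)
    (hKsymm : ∀ u, K (-u) = K u) (hKsupp : ∀ u, u ∉ Set.Icc (-1 : ℝ) 1 → K u = 0)
    (hKone : (∫ u, K u) = 1)
    (c δ M : ℝ) (hδ : 0 < δ) (hM : 0 ≤ M)
    (p : ℝ → ℝ → ℝ) (hpnn : ∀ x z, 0 ≤ p x z)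
    (hpC2 : ContDiffOn ℝ 2 (Function.uncurry p)
      (Set.Icc c (c + δ) ×ˢ (Set.univ : Set ℝ)))
    (hbd : ∀ q ∈ Set.Icc c (c + δ) ×ˢ (Set.univ : Set ℝ),
      ‖iteratedFDerivWithin ℝ 2 (Function.uncurry p)
        (Set.Icc c (c + δ) ×ˢ (Set.univ : Set ℝ)) q‖ ≤ M) :
    ∀ (z h : ℝ), 0 < h → h < δ →
      |(2 / h ^ 2) * (∫ x in Set.Ioi c, ∫ w, K ((x - c) / h) * K ((z - w) / h) * p x w)
          - p c z
          - 2 * (∫ u in Set.Ioi (0 : ℝ), u * K u) * h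
              * derivWithin (fun x => p x z) (Set.Icc c (c + δ)) c|
        ≤ M * (2 * (∫ u in Set.Ioi (0 : ℝ), u ^ 2 * K u)
            + 4 * (∫ u in Set.Ioi (0 : ℝ), u * K u) ^ 2) * h ^ 2 :=
  stmt13_general K hKnn hKsymm hKsupp hKone c δ M p hpC2 hbd
end
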